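/- arXiv:1607.06901 — 2 statements merged into one kernel-verified Lean document; each statement's English description precedes it below -/
import Mathlib

section
/- Every maximal congruence of a lattice L is a prime congruence of L. -/
/-- A lattice congruence: an equivalence relation compatible with `⊔` and `⊓`. -/
def IsLatCon {L : Type*} [Lattice L] (θ : L → L → Prop) : Prop :=
  Equivalence θ ∧ (∀ a b c d, θ a b → θ c d → θ (a ⊔ c) (b ⊔ d)) ∧
    (∀ a b c d, θ a b → θ c d → θ (a ⊓ c) (b ⊓ d))

/-- A maximal congruence: a maximal element of the proper congruences under inclusion. -/
def IsMaxCon {L : Type*} [Lattice L] (θ : L → L → Prop) : Prop :=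
  IsLatCon θ ∧ θ ≠ (fun _ _ => True) ∧
    ∀ φ : L → L → Prop, IsLatCon φ → (∀ a b, θ a b → φ a b) →
      φ = θ ∨ φ = (fun _ _ => True)

/-- A prime congruence: proper, and `α ∩ β ⊆ θ` implies `α ⊆ θ` or `β ⊆ θ`. -/
def IsPrimeCon {L : Type*} [Lattice L] (θ : L → L → Prop) : Prop :=
  IsLatCon θ ∧ θ ≠ (fun _ _ => True) ∧
    ∀ α β : L → L → Prop, IsLatCon α → IsLatCon β →
      (∀ a b, α a b → β a b → θ a b) →
      (∀ a b, α a b → θ a b) ∨ (∀ a b, β a b → θ a b)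


/-!
In the congruence lattice of a lattice, `α ⊓ β ≤ θ` forces `α ⊓ (θ ⊔ β) ≤ θ`. Given `α a b` and a
`θ ∪ β`-chain from `a` to `b`, push the chain into the interval `[a ⊓ b, a ⊔ b]` by
`t ↦ (t ⊔ (a ⊓ b)) ⊓ (a ⊔ b)`: the pushed chain is still a `θ ∪ β`-chain, and all of its points are
`α`-related because `α` collapses the whole interval, so its `β`-steps are `θ`-steps. If `θ` is
maximal and `β ≰ θ`, then `θ ⊔ β` is the total relation, hence `α ≤ θ`.
-/

open Function Relation

lemma Equivalence.eqvGen_le {X : Type*} {r p : X → X → Prop} (hp : Equivalence p) (h : r ≤ p) :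
    EqvGen r ≤ p :=
  fun a b hab => hp.eqvGen_iff.mp (EqvGen.mono h a b hab)

namespace IsLatCon

variable {L : Type*} [Lattice L] {θ α β : L → L → Prop} {a b x y : L}

lemma of_translations (he : Equivalence θ) (hsup : ∀ c a b, θ a b → θ (a ⊔ c) (b ⊔ c))
    (hinf : ∀ c a b, θ a b → θ (a ⊓ c) (b ⊓ c)) : IsLatCon θ := by
  refine ⟨he, fun a b c d hab hcd => he.trans (hsup c a b hab) ?_,
    fun a b c d hab hcd => he.trans (hinf c a b hab) ?_⟩
  · simpa only [sup_comm b] using hsup b c d hcd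
  · simpa only [inf_comm b] using hinf b c d hcd

lemma sup_right (h : IsLatCon θ) (c : L) (hab : θ a b) : θ (a ⊔ c) (b ⊔ c) :=
  h.2.1 _ _ _ _ hab (h.1.refl c)

lemma inf_right (h : IsLatCon θ) (c : L) (hab : θ a b) : θ (a ⊓ c) (b ⊓ c) :=
  h.2.2 _ _ _ _ hab (h.1.refl c)

lemma of_mem_Icc (h : IsLatCon θ) (hxy : θ x y) (ha : a ∈ Set.Icc x y) (hb : b ∈ Set.Icc x y) :
    θ a b := by
  have hay : θ a y := by simpa [sup_eq_right.mpr ha.1, sup_eq_left.mpr ha.2] using h.sup_right a hxy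
  have hby : θ b y := by simpa [sup_eq_right.mpr hb.1, sup_eq_left.mpr hb.2] using h.sup_right b hxy
  exact h.1.trans hay (h.1.symm hby)

lemma of_inf_sup (h : IsLatCon θ) (hab : θ (a ⊓ b) (a ⊔ b)) : θ a b :=
  h.of_mem_Icc hab ⟨inf_le_left, le_sup_left⟩ ⟨inf_le_right, le_sup_right⟩

lemma inf_sup (h : IsLatCon θ) (hab : θ a b) : θ (a ⊓ b) (a ⊔ b) := by
  have hinf : θ (a ⊓ b) b := by simpa using h.inf_right b hab
  have hsup : θ (a ⊔ b) b := by simpa using h.sup_right b hab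
  exact h.1.trans hinf (h.1.symm hsup)

lemma eqvGen_sup (hθ : IsLatCon θ) (hβ : IsLatCon β) : IsLatCon (EqvGen (θ ⊔ β)) := by
  have he := EqvGen.is_equivalence (θ ⊔ β)
  refine of_translations he (fun c => (he.comap (· ⊔ c)).eqvGen_le ?_)
    (fun c => (he.comap (· ⊓ c)).eqvGen_le ?_)
  · rintro a b (h | h)
    · exact EqvGen.rel _ _ (Or.inl (hθ.sup_right c h))
    · exact EqvGen.rel _ _ (Or.inr (hβ.sup_right c h))
  · rintro a b (h | h)
    · exact EqvGen.rel _ _ (Or.inl (hθ.inf_right c h))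
    · exact EqvGen.rel _ _ (Or.inr (hβ.inf_right c h))

theorem inf_eqvGen_sup_le (hθ : IsLatCon θ) (hα : IsLatCon α) (hβ : IsLatCon β)
    (hαβ : α ⊓ β ≤ θ) : α ⊓ EqvGen (θ ⊔ β) ≤ θ := by
  rintro a b ⟨hab, hJ⟩
  apply hθ.of_inf_sup
  set x := a ⊓ b
  set y := a ⊔ b
  have hxy : x ≤ y := inf_le_sup
  have hαxy : α x y := hα.inf_sup hab
  let proj : L → L := fun t => (t ⊔ x) ⊓ y
  have proj_mem (t : L) : proj t ∈ Set.Icc x y := ⟨le_inf le_sup_right hxy, inf_le_right⟩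
  have hstep : θ ⊔ β ≤ (θ on proj) := by
    rintro u v (h | h)
    · exact hθ.inf_right y (hθ.sup_right x h)
    · exact hαβ _ _ ⟨hα.of_mem_Icc hαxy (proj_mem u) (proj_mem v),
        hβ.inf_right y (hβ.sup_right x h)⟩
  have hproj : θ (proj x) (proj y) :=
    (hθ.1.comap proj).eqvGen_le hstep _ _ ((hθ.eqvGen_sup hβ).inf_sup hJ)
  simpa [proj, hxy] using hproj

end IsLatCon

/-- Every maximal congruence of a lattice is prime. -/
theorem isPrimeCon_of_isMaxCon {L : Type*} [Lattice L] (θ : L → L → Prop)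
    (hθ : IsMaxCon θ) : IsPrimeCon θ := by
  obtain ⟨hcon, hne, hmax⟩ := hθ
  refine ⟨hcon, hne, fun α β hα hβ hαβ => or_iff_not_imp_right.mpr fun hβθ => ?_⟩
  have hJ_top : EqvGen (θ ⊔ β) = fun _ _ => True := by
    refine (hmax _ (hcon.eqvGen_sup hβ) fun a b h => EqvGen.rel _ _ (Or.inl h)).resolve_left
      fun hJθ => hβθ fun a b h => ?_
    rw [← hJθ]
    exact EqvGen.rel _ _ (Or.inr h)
  intro a b hab
  refine hcon.inf_eqvGen_sup_le hα hβ (fun a b h => hαβ a b h.1 h.2) a b ⟨hab, ?_⟩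
  rw [hJ_top]
  trivial
end

section
/- Let L be a bounded distributive lattice (a distributive lattice with least element 0 and greatest element 1) and θ a congruence of L. Then the following are equivalent: (i) θ is a prime congruence of L; (ii) θ is a maximal congruence of L; (iii) θ has exactly two equivalence classes. -/
/-!
A congruence identifying `⊥` with `⊤` is total, so a proper congruence has the classes of `⊥`
and `⊤` distinct, and the three conditions all say that these are the only classes.

For `a` in a distributive lattice, `x ↦ x ⊓ a` and `x ↦ x ⊔ a` are lattice endomorphisms whose
pullbacks of `θ` intersect in `θ` itself (cancellation). If `θ` is prime, one of the two pullbacks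
lies in `θ`, which puts `a` in the class of `⊤` or of `⊥`. If `θ` is maximal, the pullback along
`x ↦ x ⊓ a`, which contains `θ`, is either `θ` or total, with the same effect. Conversely, a
congruence strictly larger than a two-class `θ` identifies `⊥` with `⊤`; and two congruences
escaping `θ` relate a common pair with one element in the class of `⊥` and the other in the
class of `⊤`.
-/

namespace IsLatCon

section Lattice

variable {L : Type*} [Lattice L] {θ : L → L → Prop}

theorem sup (hθ : IsLatCon θ) {a b c d : L} (hab : θ a b) (hcd : θ c d) :
    θ (a ⊔ c) (b ⊔ d) :=
  hθ.2.1 a b c d hab hcd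

theorem inf (hθ : IsLatCon θ) {a b c d : L} (hab : θ a b) (hcd : θ c d) :
    θ (a ⊓ c) (b ⊓ d) :=
  hθ.2.2 a b c d hab hcd

theorem rel_of_rel_bot_top [BoundedOrder L] (hθ : IsLatCon θ) (h : θ ⊥ ⊤) (x y : L) :
    θ x y := by
  have rel_top (z : L) : θ z ⊤ := by simpa using hθ.sup h (hθ.1.refl z)
  exact hθ.1.trans (rel_top x) (hθ.1.symm (rel_top y))

theorem eq_top_of_rel_bot_top [BoundedOrder L] (hθ : IsLatCon θ) (h : θ ⊥ ⊤) :
    θ = fun _ _ => True :=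
  funext₂ fun x y => eq_true (hθ.rel_of_rel_bot_top h x y)

theorem not_rel_bot_top [BoundedOrder L] (hθ : IsLatCon θ) (hne : θ ≠ fun _ _ => True) :
    ¬ θ ⊥ ⊤ :=
  fun h => hne (hθ.eq_top_of_rel_bot_top h)

end Lattice

section DistribLattice

variable {L : Type*} [DistribLattice L] {θ : L → L → Prop}

theorem comap_inf_right (hθ : IsLatCon θ) (a : L) :
    IsLatCon fun x y => θ (x ⊓ a) (y ⊓ a) := by
  refine ⟨⟨fun x => hθ.1.refl _, hθ.1.symm, hθ.1.trans⟩, fun x y u v h h' => ?_,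
    fun x y u v h h' => ?_⟩
  · simpa only [← inf_sup_right] using hθ.sup h h'
  · simpa only [← inf_inf_distrib_right] using hθ.inf h h'

theorem comap_sup_right (hθ : IsLatCon θ) (a : L) :
    IsLatCon fun x y => θ (x ⊔ a) (y ⊔ a) := by
  refine ⟨⟨fun x => hθ.1.refl _, hθ.1.symm, hθ.1.trans⟩, fun x y u v h h' => ?_,
    fun x y u v h h' => ?_⟩
  · simpa only [← sup_sup_distrib_right] using hθ.sup h h'
  · simpa only [← sup_inf_right] using hθ.inf h h'

theorem rel_of_rel_inf_of_rel_sup (hθ : IsLatCon θ) {a x y : L}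
    (hinf : θ (x ⊓ a) (y ⊓ a)) (hsup : θ (x ⊔ a) (y ⊔ a)) : θ x y := by
  let _ : Trans θ θ θ := ⟨hθ.1.trans⟩
  calc x = x ⊔ x ⊓ a := sup_inf_self.symm
    θ _ (x ⊔ y ⊓ a) := hθ.sup (hθ.1.refl x) hinf
    _ = (x ⊔ y) ⊓ (x ⊔ a) := sup_inf_left ..
    θ _ ((x ⊔ y) ⊓ (y ⊔ a)) := hθ.inf (hθ.1.refl _) hsup
    _ = y ⊔ x ⊓ a := by rw [sup_comm x y, sup_inf_left]
    θ _ (y ⊔ y ⊓ a) := hθ.sup (hθ.1.refl y) hinf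
    _ = y := sup_inf_self

end DistribLattice

end IsLatCon

section TwoClasses

variable {L : Type*} {θ : L → L → Prop}

def HasTwoClasses [Lattice L] [BoundedOrder L] (θ : L → L → Prop) : Prop :=
  ¬ θ ⊥ ⊤ ∧ ∀ x, θ x ⊥ ∨ θ x ⊤

theorem IsPrimeCon.hasTwoClasses [DistribLattice L] [BoundedOrder L] (h : IsPrimeCon θ) :
    HasTwoClasses θ := by
  obtain ⟨hθ, hne, hprime⟩ := h
  refine ⟨hθ.not_rel_bot_top hne, fun a => ?_⟩
  rcases hprime _ _ (hθ.comap_inf_right a) (hθ.comap_sup_right a)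
    (fun _ _ => hθ.rel_of_rel_inf_of_rel_sup) with h | h
  · exact Or.inr (h a ⊤ (by simpa using hθ.1.refl a))
  · exact Or.inl (h a ⊥ (by simpa using hθ.1.refl a))

theorem IsMaxCon.hasTwoClasses [DistribLattice L] [BoundedOrder L] (h : IsMaxCon θ) :
    HasTwoClasses θ := by
  obtain ⟨hθ, hne, hmax⟩ := h
  refine ⟨hθ.not_rel_bot_top hne, fun a => ?_⟩
  rcases hmax _ (hθ.comap_inf_right a) (fun _ _ h => hθ.inf h (hθ.1.refl a)) with h | h
  · exact Or.inr ((congrFun₂ h a ⊤).mp (by simpa using hθ.1.refl a))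
  · exact Or.inl (by simpa using hθ.1.symm ((congrFun₂ h ⊥ a).mpr trivial))

section Lattice

variable [Lattice L] [BoundedOrder L]

theorem HasTwoClasses.exists_rel_bot_top (h : HasTwoClasses θ) (hθ : Equivalence θ)
    {γ : L → L → Prop} (hγ : Equivalence γ) {x y : L} (hγxy : γ x y) (hθxy : ¬ θ x y) :
    ∃ a b, γ a b ∧ θ a ⊥ ∧ θ b ⊤ := by
  rcases h.2 x with hx | hx <;> rcases h.2 y with hy | hy
  · exact absurd (hθ.trans hx (hθ.symm hy)) hθxy
  · exact ⟨x, y, hγxy, hx, hy⟩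
  · exact ⟨y, x, hγ.symm hγxy, hy, hx⟩
  · exact absurd (hθ.trans hx (hθ.symm hy)) hθxy

theorem HasTwoClasses.isMaxCon (h : HasTwoClasses θ) (hθ : IsLatCon θ) : IsMaxCon θ := by
  refine ⟨hθ, fun he => h.1 (he ▸ trivial), fun φ hφ hle => ?_⟩
  by_cases hge : ∀ x y, φ x y → θ x y
  · exact Or.inl (funext₂ fun x y => propext ⟨hge x y, hle x y⟩)
  push Not at hge
  obtain ⟨x, y, hφxy, hθxy⟩ := hge
  obtain ⟨a, b, hab, ha, hb⟩ := h.exists_rel_bot_top hθ.1 hφ.1 hφxy hθxy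
  exact Or.inr (hφ.eq_top_of_rel_bot_top
    (hφ.1.trans (hle _ _ (hθ.1.symm ha)) (hφ.1.trans hab (hle _ _ hb))))

theorem HasTwoClasses.isPrimeCon (h : HasTwoClasses θ) (hθ : IsLatCon θ) : IsPrimeCon θ := by
  refine ⟨hθ, fun he => h.1 (he ▸ trivial), fun α β hα hβ hαβ => ?_⟩
  by_contra! hcon
  obtain ⟨⟨a₀, b₀, hα₀, hθ₀⟩, ⟨c₀, d₀, hβ₀, hθ₀'⟩⟩ := hcon
  obtain ⟨a, b, hab, ha, hb⟩ := h.exists_rel_bot_top hθ.1 hα.1 hα₀ hθ₀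
  obtain ⟨c, d, hcd, hc, hd⟩ := h.exists_rel_bot_top hθ.1 hβ.1 hβ₀ hθ₀'
  -- `a ⊔ c` and `a ⊔ c ⊔ b ⊓ d` are related by `α` and by `β` but lie in different `θ`-classes.
  have hαst : α (a ⊔ c) (a ⊔ c ⊔ b ⊓ d) := by
    have := hα.sup (hα.1.refl (a ⊔ c)) (hα.inf hab (hα.1.refl d))
    rwa [sup_eq_left.2 (inf_le_left.trans le_sup_left)] at this
  have hβst : β (a ⊔ c) (a ⊔ c ⊔ b ⊓ d) := by
    have := hβ.sup (hβ.1.refl (a ⊔ c)) (hβ.inf (hβ.1.refl b) hcd)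
    rwa [sup_eq_left.2 (inf_le_right.trans le_sup_right)] at this
  have hs : θ (a ⊔ c) ⊥ := by simpa using hθ.sup ha hc
  have ht : θ (a ⊔ c ⊔ b ⊓ d) ⊤ := by simpa using hθ.sup (hθ.1.refl (a ⊔ c)) (hθ.inf hb hd)
  exact h.1 (hθ.1.trans (hθ.1.symm hs) (hθ.1.trans (hαβ _ _ hαst hβst) ht))

theorem hasTwoClasses_iff_mk_quot_eq_two (hθ : IsLatCon θ) :
    HasTwoClasses θ ↔ Cardinal.mk (Quot θ) = 2 := by
  have hmk := hθ.1.quot_mk_eq_iff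
  rw [Cardinal.mk_eq_two_iff' (Quot.mk θ ⊥)]
  constructor
  · rintro ⟨hbt, hcl⟩
    refine ⟨Quot.mk θ ⊤, fun he => hbt ((hmk _ _).1 he.symm), ?_⟩
    rintro ⟨x⟩ hx
    exact (hmk _ _).2 ((hcl x).resolve_left fun h => hx ((hmk _ _).2 h))
  · rintro ⟨q, hq, huniq⟩
    have hbt : ¬ θ ⊥ ⊤ := fun h => by
      obtain ⟨x⟩ := q
      exact hq ((hmk _ _).2 (hθ.rel_of_rel_bot_top h x ⊥))
    refine ⟨hbt, fun x => or_iff_not_imp_left.2 fun hx => (hmk _ _).1 ?_⟩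
    exact (huniq _ fun he => hx ((hmk _ _).1 he)).trans
      (huniq _ fun he => hbt ((hmk _ _).1 he.symm)).symm

end Lattice

end TwoClasses

/-- In a bounded distributive lattice, a congruence is prime iff it is
maximal iff it has exactly two classes. -/
theorem primeCon_iff_maxCon_iff_two_classes_boundedDistrib
    {L : Type*} [DistribLattice L] [BoundedOrder L] (θ : L → L → Prop)
    (hθ : IsLatCon θ) :
    (IsPrimeCon θ ↔ IsMaxCon θ) ∧ (IsMaxCon θ ↔ Cardinal.mk (Quot θ) = 2) :=
  ⟨⟨fun h => h.hasTwoClasses.isMaxCon hθ, fun h => h.hasTwoClasses.isPrimeCon hθ⟩,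
    ⟨fun h => (hasTwoClasses_iff_mk_quot_eq_two hθ).1 h.hasTwoClasses,
      fun h => ((hasTwoClasses_iff_mk_quot_eq_two hθ).2 h).isMaxCon hθ⟩⟩
end
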